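/- With the same fan data ($\rho_0,\ldots,\rho_l$, $b_i$, $b_0<0$, $l>2$, $\rho_\alpha=-\rho_0$, $\gamma = \sum_{i=1}^{\alpha-1}(3-b_i)-3$): for any linear functional $R \in \mathrm{Hom}(\mathbb{Z}^2,\mathbb{Z})$ with $\langle \rho_\alpha, R\rangle = 1$, one has $\langle \rho_{\alpha-1}, R\rangle - \langle \rho_1, R\rangle = \gamma$. -/

import Mathlib

/-!
Since `⟨ρ α, R⟩ = 1` and both `(ρ (α-1), ρ α)` and `(ρ 1, ρ α)` are positive bases, the
difference of pairings is `det (ρ 1, ρ (α-1))`. Continuing `ρ 0, …, ρ α = -ρ 0` by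
`ρ (α+1) := -ρ 1` extends `b i = det (ρ (i-1), ρ (i+1))` by `b α = det (ρ 1, ρ (α-1))`, so the
claim becomes `b 1 + ⋯ + b α = 3α - 6`.

By properness of the fan, `ρ 1, …, ρ (α-1)` lie strictly on the left of `ρ 0`. For `α ≥ 3`, the
last of them farthest from the line `ℝ ρ 0` has `b = 1` and is not `ρ 1`; deleting it (a toric
blow-down) preserves all of this, lowers the `b` of its two neighbours by one, and hence lowers
the sum by `3`. The induction ends at `α = 2`, where all `b` vanish.
-/

/-- The determinant of two vectors in `ℤ²`. -/
def det2 (v w : ℤ × ℤ) : ℤ := v.1 * w.2 - v.2 * w.1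

/-- The combinatorial data of a smooth complete toric surface: primitive ray generators
`ρ 0, …, ρ l` in counterclockwise cyclic order (each consecutive pair is a positively
oriented basis of `ℤ²`), self-intersection data `b` with `b i • ρ i = ρ (i-1) + ρ (i+1)`,
the cones covering the plane, and distinct cones having disjoint interiors. -/
structure SmoothCompleteFan (l : ℕ) where
  ρ : ZMod (l + 1) → ℤ × ℤ
  b : ZMod (l + 1) → ℤ
  inj : Function.Injective ρ
  smooth_ccw : ∀ i, det2 (ρ i) (ρ (i + 1)) = 1
  rel : ∀ i, b i • ρ i = ρ (i - 1) + ρ (i + 1)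
  complete : ∀ v : ℤ × ℤ, ∃ (i : ZMod (l + 1)) (a c : ℕ),
      v = (a : ℤ) • ρ i + (c : ℤ) • ρ (i + 1)
  proper : ∀ i j : ZMod (l + 1), i ≠ j → ∀ v : ℤ × ℤ,
      ¬ ((∃ a c : ℕ, 0 < a ∧ 0 < c ∧ v = (a : ℤ) • ρ i + (c : ℤ) • ρ (i + 1)) ∧
         (∃ a c : ℕ, 0 < a ∧ 0 < c ∧ v = (a : ℤ) • ρ j + (c : ℤ) • ρ (j + 1)))

/-- The evaluation pairing between `ℤ²` and its dual (a functional represented by a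
vector `R`). -/
def pairing (v R : ℤ × ℤ) : ℤ := v.1 * R.1 + v.2 * R.2

open Finset

section Det2

variable (u v w : ℤ × ℤ)

lemma det2_self : det2 v v = 0 := by simp only [det2]; ring

lemma det2_swap : det2 v w = -det2 w v := by simp only [det2]; ring

lemma det2_neg_left : det2 (-v) w = -det2 v w := by
  simp only [det2, Prod.fst_neg, Prod.snd_neg]; ring

lemma det2_neg_right : det2 v (-w) = -det2 v w := by
  simp only [det2, Prod.fst_neg, Prod.snd_neg]; ring

lemma det2_add_left : det2 (u + v) w = det2 u w + det2 v w := by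
  simp only [det2, Prod.fst_add, Prod.snd_add]; ring

lemma det2_add_right : det2 u (v + w) = det2 u v + det2 u w := by
  simp only [det2, Prod.fst_add, Prod.snd_add]; ring

lemma det2_sub_left : det2 (u - v) w = det2 u w - det2 v w := by
  simp only [det2, Prod.fst_sub, Prod.snd_sub]; ring

lemma det2_sub_right : det2 u (v - w) = det2 u v - det2 u w := by
  simp only [det2, Prod.fst_sub, Prod.snd_sub]; ring

lemma det2_smul_left (k : ℤ) : det2 (k • v) w = k * det2 v w := by
  simp only [det2, Prod.smul_fst, Prod.smul_snd, smul_eq_mul]; ring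

lemma det2_smul_right (k : ℤ) : det2 v (k • w) = k * det2 v w := by
  simp only [det2, Prod.smul_fst, Prod.smul_snd, smul_eq_mul]; ring

variable {u v w}

lemma eq_det2_smul_add_det2_smul {a b : ℤ × ℤ} (hab : det2 a b = 1) (v : ℤ × ℤ) :
    v = det2 v b • a + det2 a v • b := by
  simp only [det2] at hab ⊢
  ext
  · simp only [Prod.fst_add, Prod.smul_fst, smul_eq_mul]; linear_combination (-v.1) * hab
  · simp only [Prod.snd_add, Prod.smul_snd, smul_eq_mul]; linear_combination (-v.2) * hab

lemma eq_det2_smul_of_det2_eq_zero {a b c : ℤ × ℤ} (hab : det2 a b = 1) (hac : det2 a c = 0) :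
    c = det2 c b • a := by
  simpa [hac] using eq_det2_smul_add_det2_smul hab c

lemma add_eq_det2_smul (huv : det2 u v = 1) (hvw : det2 v w = 1) :
    u + w = det2 u w • v := by
  simp only [det2] at *
  ext
  · simp only [Prod.fst_add, Prod.smul_fst, smul_eq_mul]
    linear_combination (-u.1) * hvw - w.1 * huv
  · simp only [Prod.snd_add, Prod.smul_snd, smul_eq_mul]
    linear_combination (-u.2) * hvw - w.2 * huv

lemma pairing_sub_pairing_eq_det2 {R : ℤ × ℤ} (huw : det2 u w = 1) (hvw : det2 v w = 1)
    (hw : pairing w R = 1) : pairing u R - pairing v R = det2 v u := by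
  simp only [pairing, det2] at *
  linear_combination (v.1 * R.1 + v.2 * R.2) * huw - (u.1 * R.1 + u.2 * R.2) * hvw
    - (u.1 * v.2 - u.2 * v.1) * hw

end Det2

def InOpenCone (a b v : ℤ × ℤ) : Prop :=
  ∃ p q : ℕ, 0 < p ∧ 0 < q ∧ v = (p : ℤ) • a + (q : ℤ) • b

lemma inOpenCone_of_det2_pos {a b v : ℤ × ℤ} (hab : det2 a b = 1) (hb : 0 < det2 v b)
    (ha : 0 < det2 a v) : InOpenCone a b v := by
  refine ⟨(det2 v b).toNat, (det2 a v).toNat, by omega, by omega, ?_⟩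
  rw [Int.toNat_of_nonneg hb.le, Int.toNat_of_nonneg ha.le]
  exact eq_det2_smul_add_det2_smul hab v

/-- The common point is `N • a + b` for `N` large. -/
lemma exists_inOpenCone_inOpenCone {a b x y : ℤ × ℤ} (hab : det2 a b = 1) (hxy : det2 x y = 1)
    (hy : 0 < det2 a y) (hx : 0 < det2 x a) : ∃ v, InOpenCone a b v ∧ InOpenCone x y v := by
  obtain ⟨N, hN, hby, hxb⟩ : ∃ N : ℤ, 1 ≤ N ∧ -det2 b y < N ∧ -det2 x b < N := by
    refine ⟨|det2 b y| + |det2 x b| + 1, ?_, ?_, ?_⟩ <;>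
      linarith [neg_abs_le (det2 b y), neg_abs_le (det2 x b), abs_nonneg (det2 b y),
        abs_nonneg (det2 x b)]
  refine ⟨N • a + b, inOpenCone_of_det2_pos hab ?_ ?_, inOpenCone_of_det2_pos hxy ?_ ?_⟩
  all_goals
    simp only [det2_add_left, det2_smul_left, det2_add_right, det2_smul_right, det2_self, hab]
    nlinarith

/-- The last maximum of `d` on `(0, M)` is an index `k + 1` with `b k = 1`: there
`b k * d (k + 1) = d k + d (k + 2)` lies strictly between `0` and `2 * d (k + 1)`. -/
lemma exists_eq_one_of_add_eq_mul {M : ℕ} (hM : 3 ≤ M) {d b : ℕ → ℤ} (hd1 : d 1 = 1)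
    (hdM : d M = 0) (hpos : ∀ j, 0 < j → j < M → 0 < d j)
    (hrec : ∀ j, j + 2 ≤ M → d j + d (j + 2) = b j * d (j + 1)) :
    ∃ k, 1 ≤ k ∧ k + 2 ≤ M ∧ b k = 1 := by
  obtain ⟨i, hi, hmax⟩ := (Icc 1 (M - 1)).exists_max_image (fun j => toLex (d j, j))
    ⟨1, by simp; omega⟩
  simp only [mem_Icc, Prod.Lex.toLex_le_toLex] at hi hmax
  have hle : ∀ j, 0 < j → j < M → d j ≤ d i ∧ (d j = d i → j ≤ i) := fun j hj hjM => by
    have := hmax j ⟨hj, by omega⟩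
    omega
  have hi2 : 2 ≤ i := by
    by_contra! hi1
    have h2 := hle 2 (by omega) (by omega)
    have := hpos 2 (by omega) (by omega)
    obtain rfl : i = 1 := by omega
    omega
  have hnext : 0 ≤ d (i + 1) ∧ d (i + 1) < d i := by
    rcases (show i + 1 ≤ M by omega).eq_or_lt with h | h
    · rw [h, hdM]; exact ⟨le_rfl, hpos i (by omega) (by omega)⟩
    · have := hle (i + 1) (by omega) h
      have := hpos (i + 1) (by omega) h
      omega
  have hprev : 0 < d (i - 1) ∧ d (i - 1) ≤ d i :=
    ⟨hpos (i - 1) (by omega) (by omega), (hle (i - 1) (by omega) (by omega)).1⟩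
  have hrec' := hrec (i - 1) (by omega)
  rw [show i - 1 + 2 = i + 1 by omega, show i - 1 + 1 = i by omega] at hrec'
  refine ⟨i - 1, by omega, by omega, ?_⟩
  have hdi : 0 < d i := by omega
  have : 0 < b (i - 1) := by nlinarith
  have : b (i - 1) < 2 := by nlinarith
  omega

lemma sum_range_succ_eq_add_sum_skip {M : Type*} [AddCommMonoid M] (f : ℕ → M) {k n : ℕ}
    (hk : k ≤ n) :
    ∑ j ∈ range (n + 1), f j = f k + ∑ j ∈ range n, f (if j < k then j else j + 1) := by
  induction n, hk using Nat.le_induction with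
  | base =>
    rw [sum_range_succ, add_comm]
    congr 1
    exact sum_congr rfl fun j hj => by rw [if_pos (mem_range.1 hj)]
  | succ n hkn ih => rw [sum_range_succ, ih, sum_range_succ, if_neg (by omega), add_assoc]

/-- A unimodular chain from `v 0` to `v m = -v 0` whose inner vectors lie strictly on the left of
`v 0`. It is continued by `v (m + 1) = -v 1`, so that the `det2 (v j) (v (j + 2))`, `j < m`, are
the self-intersection numbers `b 1, …, b m` of its antiperiodic continuation. -/
structure IsHalfTurnChain (m : ℕ) (v : ℕ → ℤ × ℤ) : Prop where
  det2_succ : ∀ j ≤ m, det2 (v j) (v (j + 1)) = 1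
  apply_length : v m = -v 0
  apply_length_succ : v (m + 1) = -v 1
  det2_pos : ∀ j, 0 < j → j < m → 0 < det2 (v 0) (v j)

namespace IsHalfTurnChain

variable {m k : ℕ} {v : ℕ → ℤ × ℤ}

lemma add_eq_smul (h : IsHalfTurnChain m v) {j : ℕ} (hj : j < m) :
    v j + v (j + 2) = det2 (v j) (v (j + 2)) • v (j + 1) :=
  add_eq_det2_smul (h.det2_succ j hj.le) (h.det2_succ (j + 1) hj)

lemma exists_blowDown_index (h : IsHalfTurnChain (m + 1) v) (hm : 2 ≤ m) :
    ∃ k, 1 ≤ k ∧ k < m ∧ det2 (v k) (v (k + 2)) = 1 := by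
  obtain ⟨k, hk1, hkm, hk⟩ := exists_eq_one_of_add_eq_mul (M := m + 1) (by omega)
    (d := fun j => det2 (v 0) (v j)) (b := fun j => det2 (v j) (v (j + 2)))
    (h.det2_succ 0 (by omega)) (by simp only [h.apply_length, det2_neg_right, det2_self, neg_zero])
    h.det2_pos fun j hj => by
      simpa only [det2_add_right, det2_smul_right] using
        congrArg (det2 (v 0)) (h.add_eq_smul (j := j) (by omega))
  exact ⟨k, hk1, by omega, hk⟩

def blowDown (v : ℕ → ℤ × ℤ) (k : ℕ) (j : ℕ) : ℤ × ℤ := v (if j ≤ k then j else j + 1)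

lemma blowDown_isHalfTurnChain (h : IsHalfTurnChain (m + 1) v) (hk1 : 1 ≤ k) (hkm : k < m)
    (hb : det2 (v k) (v (k + 2)) = 1) : IsHalfTurnChain m (blowDown v k) := by
  refine ⟨fun j hj => ?_, ?_, ?_, fun j hj0 hjm => ?_⟩ <;> simp only [blowDown]
  · rcases lt_trichotomy j k with hjk | rfl | hjk
    · rw [if_pos hjk.le, if_pos (show j + 1 ≤ k by omega)]
      exact h.det2_succ j (by omega)
    · rw [if_pos le_rfl, if_neg (by omega)]
      exact hb
    · rw [if_neg (by omega), if_neg (by omega)]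
      exact h.det2_succ (j + 1) (by omega)
  · rw [if_neg (by omega), if_pos (Nat.zero_le k)]
    exact h.apply_length
  · rw [if_neg (by omega), if_pos hk1]
    exact h.apply_length_succ
  · rw [if_pos (Nat.zero_le k)]
    split_ifs <;> exact h.det2_pos _ (by omega) (by omega)

lemma sum_det2_eq_sum_det2_blowDown_add_three (h : IsHalfTurnChain (m + 1) v) (hk1 : 1 ≤ k)
    (hkm : k < m) (hb : det2 (v k) (v (k + 2)) = 1) :
    ∑ j ∈ range (m + 1), det2 (v j) (v (j + 2))
      = ∑ j ∈ range m, det2 (blowDown v k j) (blowDown v k (j + 2)) + 3 := by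
  have hdel : v k + v (k + 2) = v (k + 1) := by
    simpa only [hb, one_smul] using h.add_eq_smul (j := k) (by omega)
  -- deleting `v (k + 1)` lowers the self-intersections of both its neighbours by one
  have hterm : ∀ j, det2 (blowDown v k j) (blowDown v k (j + 2))
      = det2 (v (if j < k then j else j + 1)) (v ((if j < k then j else j + 1) + 2))
        - (if j = k - 1 then 1 else 0) - (if j = k then 1 else 0) := fun j => by
    simp only [blowDown]
    rcases lt_trichotomy (j + 1) k with hjk | rfl | hjk
    · rw [if_pos (show j ≤ k by omega), if_pos (show j + 2 ≤ k by omega),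
        if_pos (show j < k by omega), if_neg (by omega), if_neg (by omega)]
      ring
    · rw [if_pos (show j ≤ j + 1 by omega), if_neg (show ¬ j + 2 ≤ j + 1 by omega),
        if_pos (show j < j + 1 by omega), if_pos (show j = j + 1 - 1 by omega), if_neg (by omega),
        show v (j + 2 + 1) = v (j + 2) - v (j + 1) from eq_sub_of_add_eq' hdel, det2_sub_right,
        h.det2_succ j (by omega)]
      ring
    · obtain rfl | hjk : j = k ∨ k < j := by omega
      · rw [if_pos le_rfl, if_neg (show ¬ j + 2 ≤ j by omega), if_neg (lt_irrefl j),
          if_neg (by omega), if_pos rfl,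
          show v j = v (j + 1) - v (j + 2) from eq_sub_of_add_eq hdel, det2_sub_left,
          h.det2_succ (j + 2) (by omega)]
        ring
      · rw [if_neg (show ¬ j ≤ k by omega), if_neg (show ¬ j + 2 ≤ k by omega),
          if_neg (show ¬ j < k by omega), if_neg (by omega), if_neg (by omega)]
        ring
  rw [sum_range_succ_eq_add_sum_skip _ hkm.le, hb, sum_congr rfl fun j _ => hterm j,
    sum_sub_distrib, sum_sub_distrib, sum_ite_eq', sum_ite_eq', if_pos (mem_range.2 (by omega)),
    if_pos (mem_range.2 hkm)]
  ring

theorem sum_det2 (h : IsHalfTurnChain m v) (hm : 2 ≤ m) :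
    ∑ j ∈ range m, det2 (v j) (v (j + 2)) = 3 * m - 6 := by
  induction m, hm using Nat.le_induction generalizing v with
  | base => simp [sum_range_succ, h.apply_length, h.apply_length_succ, det2_neg_right, det2_self]
  | succ m hm ih =>
    obtain ⟨k, hk1, hkm, hb⟩ := h.exists_blowDown_index hm
    rw [h.sum_det2_eq_sum_det2_blowDown_add_three hk1 hkm hb,
      ih (h.blowDown_isHalfTurnChain hk1 hkm hb)]
    push_cast
    ring

end IsHalfTurnChain

lemma natCast_ne_natCast_of_le {l a b : ℕ} (ha : a ≤ l) (hb : b ≤ l) (hab : a ≠ b) :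
    (a : ZMod (l + 1)) ≠ b := by
  rwa [Ne, ZMod.natCast_eq_natCast_iff', Nat.mod_eq_of_lt (by omega), Nat.mod_eq_of_lt (by omega)]

namespace SmoothCompleteFan

variable {l : ℕ} (F : SmoothCompleteFan l)

lemma b_natCast_add_one (j : ℕ) : F.b (j + 1) = det2 (F.ρ j) (F.ρ (j + 2)) := by
  have h := congrArg (det2 (F.ρ j)) (F.rel (j + 1))
  rwa [add_sub_cancel_right, add_assoc, one_add_one_eq_two, det2_smul_right, F.smooth_ccw,
    det2_add_right, det2_self, zero_add, mul_one] at h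

lemma det2_nonpos_of_det2_pos {i j : ZMod (l + 1)} (h : 0 < det2 (F.ρ i) (F.ρ j)) :
    det2 (F.ρ j) (F.ρ (i + 1)) ≤ 0 := by
  by_contra! h'
  obtain rfl | hij := eq_or_ne i j
  · exact (det2_self _ ▸ h).false
  · -- near `ρ j` the interiors of the cones at `i` and at `j` would overlap
    obtain ⟨v, hj, hi⟩ := exists_inOpenCone_inOpenCone (F.smooth_ccw j) (F.smooth_ccw i) h' h
    exact F.proper i j hij v ⟨hi, hj⟩

theorem det2_pos {α : ℕ} (hαl : α ≤ l) (hopp : F.ρ α = -F.ρ 0) {i : ℕ} (hi : 1 ≤ i)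
    (hiα : i < α) : 0 < det2 (F.ρ 0) (F.ρ i) := by
  induction i, hi using Nat.le_induction with
  | base =>
    have h := F.smooth_ccw 0
    rw [zero_add] at h
    rw [Nat.cast_one, h]
    exact one_pos
  | succ i hi ih =>
    have hd := ih (by omega)
    push_cast
    rcases lt_trichotomy (det2 (F.ρ 0) (F.ρ (i + 1))) 0 with hneg | hzero | hpos
    · -- `ρ α = -ρ 0` would lie in the interior of the cone of `ρ i, ρ (i + 1)`
      have := F.det2_nonpos_of_det2_pos (i := i) (j := α)
        (by rw [hopp, det2_neg_right, det2_swap]; linarith)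
      rw [hopp, det2_neg_left] at this
      linarith
    · -- `ρ (i + 1)` would be `±ρ 0`, and only `-ρ 0 = ρ α` is compatible with `ρ i`
      have hcol := eq_det2_smul_of_det2_eq_zero (F.smooth_ccw 0) hzero
      have h := F.smooth_ccw i
      rw [hcol, det2_smul_right] at h
      obtain ⟨-, h⟩ | ⟨hs, -⟩ := Int.eq_one_or_neg_one_of_mul_eq_one' h
      · rw [det2_swap] at h
        linarith
      · rw [hs, neg_one_smul, ← hopp] at hcol
        exact absurd (by exact_mod_cast F.inj hcol)
          (natCast_ne_natCast_of_le (show i + 1 ≤ l by omega) hαl (by omega))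
    · exact hpos

theorem isHalfTurnChain {α : ℕ} (hα : 1 ≤ α) (hαl : α ≤ l) (hopp : F.ρ α = -F.ρ 0) :
    IsHalfTurnChain α fun j => if j ≤ α then F.ρ j else -F.ρ (j - α) := by
  have h01 : det2 (F.ρ 0) (F.ρ 1) = 1 := by simpa using F.smooth_ccw 0
  have hsucc : F.ρ ((α + 1 : ℕ) - α) = F.ρ 1 := by push_cast; ring_nf
  refine ⟨fun j hj => ?_, ?_, ?_, fun j hj0 hjα => ?_⟩
  · obtain hjα | rfl := hj.lt_or_eq
    · rw [if_pos hj, if_pos (show j + 1 ≤ α by omega)]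
      push_cast
      exact F.smooth_ccw j
    · rw [if_pos le_rfl, if_neg (by omega), hsucc, hopp, det2_neg_left, det2_neg_right, neg_neg,
        h01]
  · simp [hopp]
  · rw [if_neg (by omega), if_pos hα, hsucc, Nat.cast_one]
  · rw [if_pos (Nat.zero_le α), if_pos hjα.le, Nat.cast_zero]
    exact F.det2_pos hαl hopp hj0 hjα

theorem sum_b_add_det2 {α : ℕ} (hα : 2 ≤ α) (hαl : α ≤ l) (hopp : F.ρ α = -F.ρ 0) :
    ∑ i ∈ Ico 1 α, F.b i + det2 (F.ρ 1) (F.ρ (α - 1 : ℕ)) = 3 * α - 6 := by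
  have h := (F.isHalfTurnChain (by omega) hαl hopp).sum_det2 hα
  obtain ⟨n, rfl⟩ : ∃ n, α = n + 1 := ⟨α - 1, by omega⟩
  rw [sum_range_succ, if_pos (by omega), if_neg (by omega)] at h
  rw [← h, sum_Ico_eq_sum_range, Nat.add_sub_cancel]
  congr 1
  · refine sum_congr rfl fun j hj => ?_
    have hj := mem_range.1 hj
    rw [if_pos (by omega), if_pos (by omega), add_comm 1 j]
    push_cast
    exact F.b_natCast_add_one j
  · have h1 : ((n + 2 : ℕ) : ZMod (l + 1)) - (n + 1 : ℕ) = 1 := by push_cast; ring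
    rw [h1, det2_neg_right, det2_swap (F.ρ n), neg_neg]

end SmoothCompleteFan

theorem pairing_diff_eq_gamma_general (l : ℕ) (F : SmoothCompleteFan l)
    (α : ℕ) (hα1 : 1 < α) (hαl : α < l)
    (hopp : F.ρ (α : ZMod (l + 1)) = - F.ρ 0)
    (γ : ℤ) (hγ : γ = (∑ i ∈ Finset.Ico 1 α, (3 - F.b ((i : ℕ) : ZMod (l + 1)))) - 3)
    (R : ℤ × ℤ) (hR : pairing (F.ρ ((α : ℕ) : ZMod (l + 1))) R = 1) :
    pairing (F.ρ (((α - 1 : ℕ) : ℕ) : ZMod (l + 1))) R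
      - pairing (F.ρ ((1 : ℕ) : ZMod (l + 1))) R = γ := by
  have hlast : det2 (F.ρ (α - 1 : ℕ)) (F.ρ α) = 1 := by
    have h := F.smooth_ccw (α - 1 : ℕ)
    rwa [← Nat.cast_succ, Nat.succ_eq_add_one, Nat.sub_add_cancel hα1.le] at h
  have hfirst : det2 (F.ρ (1 : ℕ)) (F.ρ α) = 1 := by
    rw [Nat.cast_one, hopp, det2_neg_right, det2_swap, neg_neg]
    simpa using F.smooth_ccw 0
  rw [pairing_sub_pairing_eq_det2 hlast hfirst hR, hγ, sum_sub_distrib, sum_const,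
    Nat.card_Ico, nsmul_eq_mul, Nat.cast_one]
  have := F.sum_b_add_det2 (by omega) hαl.le hopp
  push_cast [Nat.cast_sub hα1.le] at this ⊢
  linarith

/-- With `b 0 < 0`, `l > 2`, `α` the unique index with `1 < α < l` and `ρ α = -ρ 0`, and
`γ = (∑_{i=1}^{α-1} (3 - b i)) - 3`: for any functional `R` with `⟨ρ α, R⟩ = 1` one has
`⟨ρ (α-1), R⟩ - ⟨ρ 1, R⟩ = γ`. -/
theorem pairing_diff_eq_gamma (l : ℕ) (hl : 2 < l) (F : SmoothCompleteFan l)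
    (hb0 : F.b 0 < 0) (α : ℕ) (hα1 : 1 < α) (hαl : α < l)
    (hopp : F.ρ (α : ZMod (l + 1)) = - F.ρ 0)
    (γ : ℤ) (hγ : γ = (∑ i ∈ Finset.Ico 1 α, (3 - F.b ((i : ℕ) : ZMod (l + 1)))) - 3)
    (R : ℤ × ℤ) (hR : pairing (F.ρ ((α : ℕ) : ZMod (l + 1))) R = 1) :
    pairing (F.ρ (((α - 1 : ℕ) : ℕ) : ZMod (l + 1))) R
      - pairing (F.ρ ((1 : ℕ) : ZMod (l + 1))) R = γ :=
  pairing_diff_eq_gamma_general l F α hα1 hαl hopp γ hγ R hR
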